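/- For each p ∈ (0,2], the function r_p is continuous and strictly decreasing on [0,1], with r_p(0) = 1/√2 and r_p(1) = p/(2+p). -/

import Mathlib

/-!
Write `σ(x)` (`chordSlope p x`) for the slope of the chord of the concave function `t ↦ t ^ (p/2)`
between `x²` and `1`, extended by its derivative `p/2` at `x = 1`; thus `1 - x^p = σ(x) (1 - x²)`.
Concavity makes `σ` antitone and positive on `[0,1]`, and `σ` is continuous there. In terms of `σ`
the two branches of `r_p` read `1 / √(1 + 1 / (σ(x) (1 - x^p)))` on `[0, C(p)]` and
`1 / (x + 1 / σ(x))` on `[C(p), 1]`, the latter including `x = 1`, where it equals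
`(p/2) / (p/2 + 1) = p/(2+p)`. Both are visibly strictly decreasing, and both equal `C(p)` at
`x = C(p)` because `C(p)^p = 1 - C(p)`.
-/

/-- `C p` is the unique solution in `(0,1)` of `1 - x - x^p = 0` (for `p > 0`),
realized via Hilbert's epsilon operator. -/
noncomputable def Cp (p : ℝ) : ℝ :=
  Classical.epsilon (fun x : ℝ => x ∈ Set.Ioo (0 : ℝ) 1 ∧ 1 - x - x ^ p = 0)

/-- The function `r_p : [0,1] → ℝ` from the paper:
`r_p(x) = (1-x^p)/√(1-x^2+(1-x^p)^2)` for `x ∈ [0, C(p))`,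
`r_p(x) = (1-x^p)/(1-x^2+x(1-x^p))` for `x ∈ [C(p), 1)`, and `r_p(1) = p/(2+p)`. -/
noncomputable def rp (p : ℝ) : ℝ → ℝ := fun x =>
  if x = 1 then p / (2 + p)
  else if x < Cp p then (1 - x ^ p) / Real.sqrt (1 - x ^ 2 + (1 - x ^ p) ^ 2)
  else (1 - x ^ p) / (1 - x ^ 2 + x * (1 - x ^ p))

open Real Set

lemma Cp_spec {p : ℝ} (hp : 0 < p) : Cp p ∈ Ioo 0 1 ∧ 1 - Cp p - Cp p ^ p = 0 := by
  refine Classical.epsilon_spec (p := fun x : ℝ => x ∈ Ioo 0 1 ∧ 1 - x - x ^ p = 0) ?_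
  have hcont : ContinuousOn (fun x : ℝ => 1 - x - x ^ p) (Icc 0 1) :=
    (continuous_const.sub continuous_id |>.sub (continuous_rpow_const hp.le)).continuousOn
  have hzero : (0 : ℝ) ∈ Ioo (1 - 1 - 1 ^ p) (1 - 0 - 0 ^ p) := by
    simp [zero_rpow hp.ne']
  exact intermediate_value_Ioo' zero_le_one hcont hzero

section RpowChordSlope

lemma hasDerivAt_rpow_const_one (q : ℝ) : HasDerivAt (fun t : ℝ => t ^ q) q 1 := by
  simpa using hasDerivAt_rpow_const (x := 1) (p := q) (Or.inl one_ne_zero)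

lemma dslope_rpow_const_one_one (q : ℝ) : dslope (fun t : ℝ => t ^ q) 1 1 = q := by
  rw [dslope_same, (hasDerivAt_rpow_const_one q).deriv]

variable {q : ℝ}

lemma le_dslope_rpow_const_one (hq0 : 0 ≤ q) (hq1 : q ≤ 1) {t : ℝ} (ht : t ∈ Icc 0 1) :
    q ≤ dslope (fun t : ℝ => t ^ q) 1 t := by
  rcases ht.2.eq_or_lt with rfl | ht1
  · rw [dslope_rpow_const_one_one]
  · rw [dslope_of_ne _ ht1.ne, slope_comm]
    exact (concaveOn_rpow hq0 hq1).le_slope_of_hasDerivAt ht.1 (mem_Ici.2 zero_le_one) ht1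
      (hasDerivAt_rpow_const_one q)

lemma antitoneOn_dslope_rpow_const_one (hq0 : 0 ≤ q) (hq1 : q ≤ 1) :
    AntitoneOn (dslope (fun t : ℝ => t ^ q) 1) (Icc 0 1) := by
  intro a ha b hb hab
  rcases hb.2.eq_or_lt with rfl | hb1
  · rw [dslope_rpow_const_one_one]
    exact le_dslope_rpow_const_one hq0 hq1 ha
  · have ha1 := hab.trans_lt hb1
    rw [dslope_of_ne _ hb1.ne, dslope_of_ne _ ha1.ne]
    exact (concaveOn_rpow hq0 hq1).antitoneOn_slope_lt (mem_Ici.2 zero_le_one) ⟨ha.1, ha1⟩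
      ⟨hb.1, hb1⟩ hab

lemma continuousOn_dslope_rpow_const_one (hq0 : 0 ≤ q) :
    ContinuousOn (dslope (fun t : ℝ => t ^ q) 1) (Icc 0 1) :=
  ((continuousOn_dslope (Ici_mem_nhds zero_lt_one)).2
    ⟨(continuous_rpow_const hq0).continuousOn,
      (hasDerivAt_rpow_const_one q).differentiableAt⟩).mono Icc_subset_Ici_self

end RpowChordSlope

noncomputable def chordSlope (p x : ℝ) : ℝ := dslope (fun t : ℝ => t ^ (p / 2)) 1 (x ^ 2)

section ChordSlope

variable {p x : ℝ}

lemma sq_mem_Icc_zero_one (hx : x ∈ Icc (0 : ℝ) 1) : x ^ 2 ∈ Icc (0 : ℝ) 1 :=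
  ⟨sq_nonneg x, pow_le_one₀ hx.1 hx.2⟩

lemma chordSlope_mul_one_sub_sq (hx : x ∈ Ico 0 1) : chordSlope p x * (1 - x ^ 2) = 1 - x ^ p := by
  have hx2 : x ^ 2 < 1 := pow_lt_one₀ hx.1 hx.2 two_ne_zero
  have hpow : (x ^ 2) ^ (p / 2) = x ^ p := by
    rw [← rpow_natCast, ← rpow_mul hx.1]; ring_nf
  rw [chordSlope, dslope_of_ne _ hx2.ne, slope_def_field, hpow, one_rpow]
  field_simp [sub_ne_zero.2 hx2.ne]
  ring

lemma chordSlope_one : chordSlope p 1 = p / 2 := by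
  rw [chordSlope, one_pow, dslope_rpow_const_one_one]

lemma antitoneOn_chordSlope (hp0 : 0 ≤ p) (hp2 : p ≤ 2) : AntitoneOn (chordSlope p) (Icc 0 1) :=
  fun _ ha _ hb hab => antitoneOn_dslope_rpow_const_one (by linarith) (by linarith)
    (sq_mem_Icc_zero_one ha) (sq_mem_Icc_zero_one hb) (pow_le_pow_left₀ ha.1 hab 2)

lemma chordSlope_pos (hp0 : 0 < p) (hp2 : p ≤ 2) (hx : x ∈ Icc 0 1) : 0 < chordSlope p x :=
  (half_pos hp0).trans_le
    (le_dslope_rpow_const_one (by linarith) (by linarith) (sq_mem_Icc_zero_one hx))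

lemma continuousOn_chordSlope (hp0 : 0 ≤ p) : ContinuousOn (chordSlope p) (Icc 0 1) :=
  (continuousOn_dslope_rpow_const_one (by linarith)).comp (continuousOn_pow 2)
    fun _ => sq_mem_Icc_zero_one

end ChordSlope

section Branches

variable {p : ℝ}

lemma strictAntiOn_one_sub_rpow (hp : 0 < p) : StrictAntiOn (fun x : ℝ => 1 - x ^ p) (Ici 0) :=
  fun _ ha _ _ hab => sub_lt_sub_left (rpow_lt_rpow ha hab hp) 1

lemma one_sub_rpow_pos (hp : 0 < p) {x : ℝ} (hx : x ∈ Ico 0 1) : 0 < 1 - x ^ p :=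
  sub_pos.2 (rpow_lt_one hx.1 hx.2 hp)

lemma continuousOn_one_sub_rpow_div_sqrt (hp : 0 ≤ p) :
    ContinuousOn (fun x : ℝ => (1 - x ^ p) / √(1 - x ^ 2 + (1 - x ^ p) ^ 2)) (Ico 0 1) := by
  have hN : Continuous fun x : ℝ => 1 - x ^ p := continuous_const.sub (continuous_rpow_const hp)
  refine hN.continuousOn.div (by fun_prop) fun x hx => ?_
  have : 0 < 1 - x ^ 2 := sub_pos.2 (pow_lt_one₀ hx.1 hx.2 two_ne_zero)
  positivity

lemma strictAntiOn_one_sub_rpow_div_sqrt (hp0 : 0 < p) (hp2 : p ≤ 2) :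
    StrictAntiOn (fun x : ℝ => (1 - x ^ p) / √(1 - x ^ 2 + (1 - x ^ p) ^ 2)) (Ico 0 1) := by
  have hform : ∀ x ∈ Ico (0 : ℝ) 1, (1 - x ^ p) / √(1 - x ^ 2 + (1 - x ^ p) ^ 2) =
      1 / √(1 + 1 / (chordSlope p x * (1 - x ^ p))) := by
    intro x hx
    have hσ := chordSlope_pos hp0 hp2 (Ico_subset_Icc_self hx)
    have hN := one_sub_rpow_pos hp0 hx
    have hsq : 1 - x ^ 2 = (1 - x ^ p) / chordSlope p x := by
      rw [← chordSlope_mul_one_sub_sq hx]; field_simp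
    rw [hsq, show (1 - x ^ p) / chordSlope p x + (1 - x ^ p) ^ 2 =
      (1 - x ^ p) ^ 2 * (1 + 1 / (chordSlope p x * (1 - x ^ p))) by field_simp; ring,
      sqrt_mul (sq_nonneg _), sqrt_sq hN.le]
    field_simp
  intro a ha b hb hab
  have hprod : chordSlope p b * (1 - b ^ p) < chordSlope p a * (1 - a ^ p) :=
    mul_lt_mul' (antitoneOn_chordSlope hp0.le hp2 (Ico_subset_Icc_self ha)
        (Ico_subset_Icc_self hb) hab.le)
      (strictAntiOn_one_sub_rpow hp0 ha.1 hb.1 hab) (one_sub_rpow_pos hp0 hb).le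
      (chordSlope_pos hp0 hp2 (Ico_subset_Icc_self ha))
  have hb0 : 0 < chordSlope p b * (1 - b ^ p) :=
    mul_pos (chordSlope_pos hp0 hp2 (Ico_subset_Icc_self hb)) (one_sub_rpow_pos hp0 hb)
  have ha0 := hb0.trans hprod
  simp only [hform a ha, hform b hb]
  gcongr

lemma continuousOn_chordSlope_div (hp0 : 0 < p) (hp2 : p ≤ 2) :
    ContinuousOn (fun x => chordSlope p x / (x * chordSlope p x + 1)) (Icc 0 1) := by
  refine (continuousOn_chordSlope hp0.le).div
    ((continuousOn_id.mul (continuousOn_chordSlope hp0.le)).add continuousOn_const) fun x hx => ?_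
  have hσ := chordSlope_pos hp0 hp2 hx
  have hx0 := hx.1
  positivity

lemma strictAntiOn_chordSlope_div (hp0 : 0 < p) (hp2 : p ≤ 2) :
    StrictAntiOn (fun x => chordSlope p x / (x * chordSlope p x + 1)) (Icc 0 1) := by
  have hpos : ∀ x ∈ Icc (0 : ℝ) 1, 0 < chordSlope p x := fun x hx => chordSlope_pos hp0 hp2 hx
  have hform : ∀ x ∈ Icc (0 : ℝ) 1,
      chordSlope p x / (x * chordSlope p x + 1) = 1 / (x + 1 / chordSlope p x) := by
    intro x hx
    have hσ := hpos x hx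
    field_simp
  have hmono : StrictMonoOn (fun x => x + 1 / chordSlope p x) (Icc 0 1) :=
    strictMonoOn_id.add_monotone fun a ha b hb hab =>
      one_div_le_one_div_of_le (hpos b hb) (antitoneOn_chordSlope hp0.le hp2 ha hb hab)
  intro a ha b hb hab
  have hab' := hmono ha hb hab
  have ha0 : 0 < a + 1 / chordSlope p a := add_pos_of_nonneg_of_pos ha.1 (one_div_pos.2 (hpos a ha))
  simp only [hform a ha, hform b hb]
  gcongr

lemma rp_eq_of_le_Cp (hp : 0 < p) {x : ℝ} (hx : x ≤ Cp p) :
    rp p x = (1 - x ^ p) / √(1 - x ^ 2 + (1 - x ^ p) ^ 2) := by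
  obtain ⟨⟨-, hC1⟩, hC⟩ := Cp_spec hp
  rcases hx.lt_or_eq with hx | rfl
  · rw [rp, if_neg (hx.trans hC1).ne, if_pos hx]
  · rw [rp, if_neg hC1.ne, if_neg (lt_irrefl _), show Cp p ^ p = 1 - Cp p by linarith]
    ring_nf
    simp

lemma rp_eq_of_Cp_le (hp : 0 < p) {x : ℝ} (hx : Cp p ≤ x) (hx1 : x ≤ 1) :
    rp p x = chordSlope p x / (x * chordSlope p x + 1) := by
  obtain ⟨⟨hC0, -⟩, -⟩ := Cp_spec hp
  rcases hx1.lt_or_eq with hx1 | rfl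
  · have hsq : 0 < 1 - x ^ 2 := sub_pos.2 (pow_lt_one₀ (hC0.le.trans hx) hx1 two_ne_zero)
    rw [rp, if_neg hx1.ne, if_neg hx.not_gt, ← chordSlope_mul_one_sub_sq ⟨hC0.le.trans hx, hx1⟩]
    field_simp
    ring
  · rw [rp, if_pos rfl, chordSlope_one]
    field_simp
    ring

end Branches

/-- For each `p ∈ (0,2]`, the function `r_p` is continuous and strictly decreasing on
`[0,1]`, with `r_p(0) = 1/√2` and `r_p(1) = p/(2+p)`. -/
theorem statement2 (p : ℝ) (hp0 : 0 < p) (hp2 : p ≤ 2) :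
    ContinuousOn (rp p) (Set.Icc (0 : ℝ) 1) ∧
    StrictAntiOn (rp p) (Set.Icc (0 : ℝ) 1) ∧
    rp p 0 = 1 / Real.sqrt 2 ∧
    rp p 1 = p / (2 + p) := by
  obtain ⟨⟨hC0, hC1⟩, -⟩ := Cp_spec hp0
  have hsub_left : Icc 0 (Cp p) ⊆ Ico 0 1 := Icc_subset_Ico_right hC1
  have hsub_right : Icc (Cp p) 1 ⊆ Icc 0 1 := Icc_subset_Icc_left hC0.le
  have heq_left : EqOn (rp p) (fun x => (1 - x ^ p) / √(1 - x ^ 2 + (1 - x ^ p) ^ 2))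
      (Icc 0 (Cp p)) := fun x hx => rp_eq_of_le_Cp hp0 hx.2
  have heq_right : EqOn (rp p) (fun x => chordSlope p x / (x * chordSlope p x + 1))
      (Icc (Cp p) 1) := fun x hx => rp_eq_of_Cp_le hp0 hx.1 hx.2
  rw [← Icc_union_Icc_eq_Icc hC0.le hC1.le]
  refine ⟨?_, ?_, ?_, ?_⟩
  · exact (((continuousOn_one_sub_rpow_div_sqrt hp0.le).mono hsub_left).congr heq_left
      ).union_of_isClosed (((continuousOn_chordSlope_div hp0 hp2).mono hsub_right).congr heq_right)
      isClosed_Icc isClosed_Icc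
  · exact (((strictAntiOn_one_sub_rpow_div_sqrt hp0 hp2).mono hsub_left).congr heq_left.symm).union
      (((strictAntiOn_chordSlope_div hp0 hp2).mono hsub_right).congr heq_right.symm)
      (isGreatest_Icc hC0.le) (isLeast_Icc hC1.le)
  · rw [rp_eq_of_le_Cp hp0 hC0.le, zero_rpow hp0.ne']
    norm_num
  · rw [rp, if_pos rfl]
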